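/- With the notation of the Dunkl-Appell generating function, Σ_{k=0}^∞ p_{k+1}(nx)/γ_μ(k) = nx·A(1)e_μ(nx) + μ e_μ(−nx)[A(1) − A(−1)] + A'(1) e_μ(nx). -/

import Mathlib

open scoped BigOperators
open MeasureTheory Filter

/-- Parity indicator: 0 for even, 1 for odd. -/
def theta (j : ℕ) : ℝ := if j % 2 = 1 then 1 else 0

/-- Dunkl coefficients via the recursion. -/
noncomputable def gamRec (μ : ℝ) : ℕ → ℝ
  | 0 => 1
  | k + 1 => ((k : ℝ) + 1 + 2 * μ * theta (k + 1)) * gamRec μ k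

/-- Dunkl exponential. -/
noncomputable def emu (μ : ℝ) (x : ℝ) : ℝ := ∑' k : ℕ, x ^ k / gamRec μ k

/-- Dunkl-Appell polynomials. -/
noncomputable def pk (μ : ℝ) (a : ℕ → ℝ) (k : ℕ) (x : ℝ) : ℝ :=
  ∑ j ∈ Finset.range (k + 1),
    (gamRec μ k / (gamRec μ j * gamRec μ (k - j))) * a (k - j) * x ^ j

/-- The analytic function A. -/
noncomputable def Afun (μ : ℝ) (a : ℕ → ℝ) (t : ℝ) : ℝ := ∑' r : ℕ, a r * t ^ r / gamRec μ r

/-- Dunkl-Appell Gamma-type (Szász–Durrmeyer) operator. -/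
noncomputable def Dop (μ lam : ℝ) (a : ℕ → ℝ) (n : ℕ) (f : ℝ → ℝ) (x : ℝ) : ℝ :=
  (1 / (emu μ (n * x) * Afun μ a 1)) *
    ∑' k : ℕ, (pk μ a k (n * x) / gamRec μ k) *
      ((n : ℝ) ^ ((k : ℝ) + 2 * μ * theta k + lam + 1) /
        Real.Gamma ((k : ℝ) + 2 * μ * theta k + lam + 1)) *
      ∫ t in Set.Ioi (0 : ℝ), Real.exp (-(n : ℝ) * t) * t ^ ((k : ℝ) + 2 * μ * theta k + lam) * f t

/-- Analyticity (radius of convergence > 1) hypothesis for A. -/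
def AnalyticHyp (μ : ℝ) (a : ℕ → ℝ) : Prop :=
  ∃ R > (1 : ℝ), ∀ t : ℝ, |t| < R → Summable (fun r : ℕ => a r * t ^ r / gamRec μ r)

/-- Modulus of continuity on [0,∞). -/
noncomputable def modCont (f : ℝ → ℝ) (δ : ℝ) : ℝ :=
  sSup {d : ℝ | ∃ x y : ℝ, 0 ≤ x ∧ 0 ≤ y ∧ |x - y| ≤ δ ∧ d = |f x - f y|}

/-- sup norm on [0,∞). -/
noncomputable def CBnorm (g : ℝ → ℝ) : ℝ := sSup ((fun x => |g x|) '' Set.Ici 0)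

/-- Dunkl coefficients via the Gamma-function formulas of the paper. -/
noncomputable def gamG (μ : ℝ) (m : ℕ) : ℝ :=
  if m % 2 = 0 then
    2 ^ m * (Nat.factorial (m / 2)) * Real.Gamma ((m / 2 : ℕ) + μ + 1 / 2) / Real.Gamma (μ + 1 / 2)
  else
    2 ^ m * (Nat.factorial ((m - 1) / 2)) * Real.Gamma (((m - 1) / 2 : ℕ) + μ + 3 / 2) / Real.Gamma (μ + 1 / 2)


/-!
With `u_j = y^j / γ_μ(j)` and `v_i = a_i / γ_μ(i)`, `p_m(y) / γ_μ(m)` is the Cauchy product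
`Σ_{j+i=m} u_j v_i`, and `p_{k+1}(y) / γ_μ(k) = [k+1]_μ p_{k+1}(y) / γ_μ(k+1)` where
`[m]_μ = m + 2μθ(m)` (`dunklNum`). Because `θ(j+i) = θ(j) + θ(i) - 2θ(j)θ(i)`, these weights obey
the twisted Leibniz rule `[j+i]_μ = [j]_μ + [i]_μ - 4μθ(j)θ(i)`, so the series splits into three
products of series. They are evaluated by `Σ [j]_μ u_j = y e_μ(y)` (telescoping the recursion of
`γ_μ`), `Σ [i]_μ v_i = A'(1) + 2μ Σ θ(i) v_i`, and `Σ θ(j) c_j = (Σ c_j - Σ (-1)^j c_j) / 2`,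
which turns the θ-sums into `e_μ(y) - e_μ(-y)` and `A(1) - A(-1)`.
-/

open Finset

lemma theta_eq (j : ℕ) : theta j = (1 - (-1) ^ j) / 2 := by
  rcases Nat.even_or_odd j with h | h
  · simp [theta, h.neg_one_pow, Nat.even_iff.mp h]
  · simp [theta, h.neg_one_pow, Nat.odd_iff.mp h]

lemma theta_nonneg (j : ℕ) : 0 ≤ theta j := by
  unfold theta; split <;> norm_num

lemma abs_theta_le_one (j : ℕ) : |theta j| ≤ 1 := by
  unfold theta; split <;> norm_num

lemma theta_add (j i : ℕ) : theta (j + i) = theta j + theta i - 2 * theta j * theta i := by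
  simp only [theta_eq, pow_add]
  ring

lemma tsum_theta_mul {c : ℕ → ℝ} (hc : Summable c) (hc' : Summable fun j => (-1) ^ j * c j) :
    ∑' j, theta j * c j = (∑' j, c j - ∑' j, (-1) ^ j * c j) / 2 := by
  rw [← hc.tsum_sub hc', ← tsum_div_const]
  exact tsum_congr fun j => by rw [theta_eq]; ring

lemma summable_norm_theta_mul {u : ℕ → ℝ} (hu : Summable fun j => ‖u j‖) :
    Summable fun j => ‖theta j * u j‖ :=
  hu.of_nonneg_of_le (fun _ => norm_nonneg _) fun j => by
    rw [norm_mul]; exact mul_le_of_le_one_left (norm_nonneg _) (abs_theta_le_one j)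

def dunklNum (μ : ℝ) (k : ℕ) : ℝ := k + 2 * μ * theta k

section DunklNum

variable {μ : ℝ}

lemma dunklNum_zero : dunklNum μ 0 = 0 := by simp [dunklNum, theta]

lemma dunklNum_add (j i : ℕ) :
    dunklNum μ (j + i) = dunklNum μ j + dunklNum μ i - 4 * μ * theta j * theta i := by
  simp only [dunklNum, theta_add, Nat.cast_add]
  ring

lemma natCast_le_dunklNum (hμ : 0 ≤ μ) (k : ℕ) : (k : ℝ) ≤ dunklNum μ k := by
  have := theta_nonneg k
  unfold dunklNum; nlinarith

lemma gamRec_succ (k : ℕ) : gamRec μ (k + 1) = dunklNum μ (k + 1) * gamRec μ k := by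
  simp [gamRec, dunklNum]

lemma factorial_le_gamRec (hμ : 0 ≤ μ) (k : ℕ) : (k.factorial : ℝ) ≤ gamRec μ k := by
  induction k with
  | zero => simp [gamRec]
  | succ k ih =>
    rw [gamRec_succ, Nat.factorial_succ, Nat.cast_mul]
    gcongr
    · exact (Nat.cast_nonneg _).trans (natCast_le_dunklNum hμ _)
    · exact natCast_le_dunklNum hμ _

lemma gamRec_pos (hμ : 0 ≤ μ) (k : ℕ) : 0 < gamRec μ k :=
  (Nat.cast_pos.mpr k.factorial_pos).trans_le (factorial_le_gamRec hμ k)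

lemma summable_norm_dunklNum_mul {u : ℕ → ℝ} (hu : Summable fun j => ‖u j‖)
    (hu' : Summable fun j : ℕ => ‖(j : ℝ) * u j‖) : Summable fun j => ‖dunklNum μ j * u j‖ := by
  have hθ := (summable_norm_theta_mul hu).mul_left (2 * |μ|)
  refine (hu'.add hθ).of_nonneg_of_le (fun _ => norm_nonneg _) fun j => ?_
  calc ‖dunklNum μ j * u j‖ = ‖(j : ℝ) * u j + 2 * μ * (theta j * u j)‖ := by
        rw [dunklNum]; ring_nf
    _ ≤ ‖(j : ℝ) * u j‖ + 2 * |μ| * ‖theta j * u j‖ := by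
        refine (norm_add_le _ _).trans_eq ?_
        rw [norm_mul (2 * μ), norm_mul 2, Real.norm_ofNat, Real.norm_eq_abs μ]

lemma tsum_dunklNum_mul {u : ℕ → ℝ} (hu : Summable fun j => ‖u j‖)
    (hu' : Summable fun j : ℕ => (j : ℝ) * u j) :
    ∑' j, dunklNum μ j * u j = ∑' j : ℕ, (j : ℝ) * u j + 2 * μ * ∑' j, theta j * u j := by
  rw [← tsum_mul_left, ← hu'.tsum_add ((summable_norm_theta_mul hu).of_norm.mul_left _)]
  exact tsum_congr fun j => by rw [dunklNum]; ring

lemma hasSum_sum_range_mul {u v : ℕ → ℝ} (hu : Summable fun j => ‖u j‖)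
    (hv : Summable fun i => ‖v i‖) :
    HasSum (fun m => ∑ j ∈ range (m + 1), u j * v (m - j)) ((∑' j, u j) * ∑' i, v i) := by
  rw [tsum_mul_tsum_eq_tsum_sum_range_of_summable_norm hu hv]
  exact (summable_norm_sum_mul_range_of_summable_norm hu hv).of_norm.hasSum

theorem hasSum_dunklNum_mul_sum_range_mul {u v : ℕ → ℝ}
    (hu : Summable fun j => ‖u j‖) (hu' : Summable fun j => ‖dunklNum μ j * u j‖)
    (hv : Summable fun i => ‖v i‖) (hv' : Summable fun i => ‖dunklNum μ i * v i‖) :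
    HasSum (fun m => dunklNum μ m * ∑ j ∈ range (m + 1), u j * v (m - j))
      ((∑' j, dunklNum μ j * u j) * (∑' i, v i) + (∑' j, u j) * (∑' i, dunklNum μ i * v i)
        - 4 * μ * ((∑' j, theta j * u j) * ∑' i, theta i * v i)) := by
  have hθ := hasSum_sum_range_mul (summable_norm_theta_mul hu) (summable_norm_theta_mul hv)
  refine (((hasSum_sum_range_mul hu' hv).add (hasSum_sum_range_mul hu hv')).sub
    (hθ.mul_left (4 * μ))).congr_fun fun m => ?_
  rw [mul_sum, mul_sum, ← sum_add_distrib, ← sum_sub_distrib]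
  refine sum_congr rfl fun j hj => ?_
  have hm : m = j + (m - j) := by rw [mem_range] at hj; omega
  rw [hm, dunklNum_add, ← hm]
  ring

end DunklNum

section DunklExponential

variable {μ : ℝ}

lemma summable_norm_pow_div_gamRec (hμ : 0 ≤ μ) (y : ℝ) :
    Summable fun j => ‖y ^ j / gamRec μ j‖ :=
  (Real.summable_pow_div_factorial |y|).of_nonneg_of_le (fun _ => norm_nonneg _) fun j => by
    rw [norm_div, norm_pow, Real.norm_eq_abs, Real.norm_of_nonneg (gamRec_pos hμ j).le]
    exact div_le_div_of_nonneg_left (by positivity) (by positivity) (factorial_le_gamRec hμ j)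

lemma dunklNum_mul_pow_div_gamRec_succ (hμ : 0 ≤ μ) (y : ℝ) (j : ℕ) :
    dunklNum μ (j + 1) * (y ^ (j + 1) / gamRec μ (j + 1)) = y * (y ^ j / gamRec μ j) := by
  have h := (gamRec_pos hμ (j + 1)).ne'
  rw [gamRec_succ, mul_ne_zero_iff] at h
  rw [gamRec_succ]
  field_simp [h.1, h.2]
  ring

lemma summable_norm_dunklNum_mul_pow_div_gamRec (hμ : 0 ≤ μ) (y : ℝ) :
    Summable fun j => ‖dunklNum μ j * (y ^ j / gamRec μ j)‖ := by
  rw [← summable_nat_add_iff 1]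
  simp only [dunklNum_mul_pow_div_gamRec_succ hμ, norm_mul]
  exact (summable_norm_pow_div_gamRec hμ y).mul_left ‖y‖

lemma tsum_dunklNum_mul_pow_div_gamRec (hμ : 0 ≤ μ) (y : ℝ) :
    ∑' j, dunklNum μ j * (y ^ j / gamRec μ j) = y * emu μ y := by
  rw [(summable_norm_dunklNum_mul_pow_div_gamRec hμ y).of_norm.tsum_eq_zero_add]
  simp only [dunklNum_zero, zero_mul, zero_add, dunklNum_mul_pow_div_gamRec_succ hμ,
    tsum_mul_left, emu]

lemma tsum_theta_mul_pow_div_gamRec (hμ : 0 ≤ μ) (y : ℝ) :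
    ∑' j, theta j * (y ^ j / gamRec μ j) = (emu μ y - emu μ (-y)) / 2 := by
  have h (j : ℕ) : (-1) ^ j * (y ^ j / gamRec μ j) = (-y) ^ j / gamRec μ j := by
    rw [neg_pow y, mul_div_assoc]
  rw [tsum_theta_mul (summable_norm_pow_div_gamRec hμ y).of_norm]
  · simp only [h, emu]
  · simpa only [h] using (summable_norm_pow_div_gamRec hμ (-y)).of_norm

end DunklExponential

section PowerSeries

variable {c : ℕ → ℝ} {t : ℝ}

lemma summable_norm_natCast_pow_mul_mul_pow (hc : Summable fun r => c r * t ^ r) (k : ℕ)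
    {s : ℝ} (hs : |s| < |t|) : Summable fun r : ℕ => ‖(r : ℝ) ^ k * c r * s ^ r‖ := by
  obtain ⟨C, hC⟩ := hc.tendsto_atTop_zero.norm.bddAbove_range
  have ht : 0 < ‖t‖ := (abs_nonneg s).trans_lt hs
  have hq : ‖‖s‖ / ‖t‖‖ < 1 := by rwa [norm_div, norm_norm, norm_norm, div_lt_one ht]
  refine ((summable_pow_mul_geometric_of_norm_lt_one k hq).mul_left C).of_nonneg_of_le
    (fun _ => norm_nonneg _) fun r => ?_
  calc ‖(r : ℝ) ^ k * c r * s ^ r‖ = ‖c r * t ^ r‖ * ((r : ℝ) ^ k * (‖s‖ / ‖t‖) ^ r) := by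
        simp only [norm_mul, norm_pow, Real.norm_natCast, div_pow]
        field_simp [ht.ne']
    _ ≤ C * ((r : ℝ) ^ k * (‖s‖ / ‖t‖) ^ r) := by
        gcongr
        exact hC ⟨r, rfl⟩

lemma hasDerivAt_tsum_mul_pow (hc : Summable fun r => c r * t ^ r) {z : ℝ} (hz : |z| < |t|) :
    HasDerivAt (fun x => ∑' r, c r * x ^ r) (∑' r : ℕ, c r * (r * z ^ (r - 1))) z := by
  obtain ⟨ρ, hzρ, hρt⟩ := exists_between hz
  have hρ : 0 < ρ := (abs_nonneg z).trans_lt hzρ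
  have hρ' : |ρ| < |t| := by rwa [abs_of_pos hρ]
  have hzball : z ∈ Metric.ball 0 ρ := by rwa [Metric.mem_ball, Real.dist_eq, sub_zero]
  refine hasDerivAt_tsum_of_isPreconnected
    ((summable_norm_natCast_pow_mul_mul_pow hc 1 hρ').div_const ρ) Metric.isOpen_ball
    (convex_ball 0 ρ).isPreconnected (fun r x _ => (hasDerivAt_pow r x).const_mul (c r))
    (fun r x hx => ?_) hzball
    (by simpa using (summable_norm_natCast_pow_mul_mul_pow hc 0 hz).of_norm) hzball
  rw [Metric.mem_ball, Real.dist_eq, sub_zero] at hx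
  rcases r with _ | m
  · simp only [CharP.cast_eq_zero, zero_mul, mul_zero, norm_zero]
    positivity
  · rw [le_div_iff₀ hρ]
    simp only [Nat.add_sub_cancel, pow_one, norm_mul, norm_pow, Real.norm_eq_abs,
      abs_of_pos hρ, Nat.abs_cast]
    calc |c (m + 1)| * ((m + 1 : ℕ) * |x| ^ m) * ρ
        = (m + 1 : ℕ) * |c (m + 1)| * (|x| ^ m * ρ) := by ring
      _ ≤ (m + 1 : ℕ) * |c (m + 1)| * (ρ ^ m * ρ) := by gcongr
      _ = (m + 1 : ℕ) * |c (m + 1)| * ρ ^ (m + 1) := by rw [pow_succ]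

end PowerSeries

section DunklAppell

variable {μ : ℝ} {a : ℕ → ℝ}

lemma Afun_eq_tsum (t : ℝ) :
    Afun μ a t = ∑' r, a r / gamRec μ r * t ^ r :=
  tsum_congr fun r => by ring

lemma Afun_one : Afun μ a 1 = ∑' r, a r / gamRec μ r := by
  simp [Afun_eq_tsum]

lemma Afun_neg_one : Afun μ a (-1) = ∑' r, (-1) ^ r * (a r / gamRec μ r) := by
  simp only [Afun_eq_tsum, mul_comm]

lemma AnalyticHyp.exists_summable (hA : AnalyticHyp μ a) :
    ∃ t, |1| < |t| ∧ Summable fun r => a r / gamRec μ r * t ^ r := by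
  obtain ⟨R, hR, hsum⟩ := hA
  have ht : |(1 + R) / 2| = (1 + R) / 2 := abs_of_pos (by linarith)
  refine ⟨(1 + R) / 2, by rw [ht, abs_one]; linarith, ?_⟩
  exact (hsum _ (by rw [ht]; linarith)).congr fun r => by ring

lemma AnalyticHyp.summable_norm_natCast_pow_mul (hA : AnalyticHyp μ a) (k : ℕ) :
    Summable fun r : ℕ => ‖(r : ℝ) ^ k * (a r / gamRec μ r)‖ := by
  obtain ⟨t, ht, hsum⟩ := hA.exists_summable
  simpa [mul_assoc] using summable_norm_natCast_pow_mul_mul_pow hsum k ht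

lemma AnalyticHyp.hasDerivAt_Afun_one (hA : AnalyticHyp μ a) :
    HasDerivAt (Afun μ a) (∑' r : ℕ, (r : ℝ) * (a r / gamRec μ r)) 1 := by
  obtain ⟨t, ht, hsum⟩ := hA.exists_summable
  have h := hasDerivAt_tsum_mul_pow hsum ht
  simp only [one_pow, mul_one, ← Afun_eq_tsum] at h
  simpa only [mul_comm] using h

lemma pk_succ_div_gamRec (hμ : 0 ≤ μ) (k : ℕ) (y : ℝ) :
    pk μ a (k + 1) y / gamRec μ k =
      dunklNum μ (k + 1) *
        ∑ j ∈ range (k + 1 + 1), y ^ j / gamRec μ j * (a (k + 1 - j) / gamRec μ (k + 1 - j)) := by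
  rw [pk, sum_div, mul_sum]
  refine sum_congr rfl fun j _ => ?_
  rw [gamRec_succ]
  field_simp [(gamRec_pos hμ k).ne', (gamRec_pos hμ j).ne', (gamRec_pos hμ (k + 1 - j)).ne']

end DunklAppell

theorem appell_sum_shift_one_general (μ : ℝ) (hμ : 0 ≤ μ) (a : ℕ → ℝ)
    (hA : AnalyticHyp μ a) (n : ℕ) (x : ℝ) :
    ∑' k : ℕ, pk μ a (k + 1) (n * x) / gamRec μ k =
      (n * x) * Afun μ a 1 * emu μ (n * x) +
      μ * emu μ (-(n * x)) * (Afun μ a 1 - Afun μ a (-1)) +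
      deriv (Afun μ a) 1 * emu μ (n * x) := by
  set y : ℝ := n * x
  have hv : Summable fun r => ‖a r / gamRec μ r‖ := by
    simpa using hA.summable_norm_natCast_pow_mul 0
  have hv' : Summable fun r : ℕ => ‖(r : ℝ) * (a r / gamRec μ r)‖ := by
    simpa using hA.summable_norm_natCast_pow_mul 1
  have hsum := hasSum_dunklNum_mul_sum_range_mul (summable_norm_pow_div_gamRec hμ y)
    (summable_norm_dunklNum_mul_pow_div_gamRec hμ y) hv (summable_norm_dunklNum_mul hv hv')
  have hshift := (hasSum_nat_add_iff' 1).mpr hsum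
  rw [sum_range_one, dunklNum_zero, zero_mul, sub_zero] at hshift
  rw [tsum_congr fun k => pk_succ_div_gamRec hμ k y, hshift.tsum_eq,
    hA.hasDerivAt_Afun_one.deriv, Afun_one, Afun_neg_one, tsum_dunklNum_mul_pow_div_gamRec hμ,
    tsum_theta_mul_pow_div_gamRec hμ, tsum_dunklNum_mul hv hv'.of_norm, tsum_theta_mul hv.of_norm (.of_norm (by simpa using hv))]
  unfold emu
  ring

theorem appell_sum_shift_one (μ : ℝ) (hμ : 0 ≤ μ) (a : ℕ → ℝ) (ha0 : a 0 ≠ 0)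
    (hA : AnalyticHyp μ a) (n : ℕ) (x : ℝ) (hx : 0 ≤ x) :
    ∑' k : ℕ, pk μ a (k + 1) (n * x) / gamRec μ k =
      (n * x) * Afun μ a 1 * emu μ (n * x) +
      μ * emu μ (-(n * x)) * (Afun μ a 1 - Afun μ a (-1)) +
      deriv (Afun μ a) 1 * emu μ (n * x) :=
  appell_sum_shift_one_general μ hμ a hA n x
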